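/- arXiv:2504.14123 — 2 statements merged into one kernel-verified Lean document; each statement's English description precedes it below -/
import Mathlib

section
/- The softmax probability is bounded below by the one-vs-each product of sigmoids: exp(f_c) / Σ_{c'} exp(f_{c'}) ≥ Π_{c' ≠ c} σ(f_c - f_{c'}), where σ(x) = 1/(1+e^{-x}). -/
open Finset Real

/-! Dividing numerator and denominator by `exp (f c)` writes the softmax probability as
`1 / (1 + ∑_{c' ≠ c} g c')` and the product of sigmoids as `∏_{c' ≠ c} 1 / (1 + g c')`, with
`g c' = exp (f c' - f c) ≥ 0`. The claim is then the inequality `1 + ∑ g ≤ ∏ (1 + g)`, obtained by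
expanding the product and dropping the cross terms. -/

theorem Finset.one_add_sum_le_prod_one_add {ι R : Type*} [CommSemiring R] [PartialOrder R]
    [IsOrderedRing R] [DecidableEq ι] (s : Finset ι) {a : ι → R} (ha : ∀ i ∈ s, 0 ≤ a i) :
    1 + ∑ i ∈ s, a i ≤ ∏ i ∈ s, (1 + a i) := by
  induction s using Finset.induction_on with
  | empty => simp
  | insert j s hj ih =>
    rw [sum_insert hj, prod_insert hj]
    have haj : 0 ≤ a j := ha j (mem_insert_self j s)
    have hs : ∀ i ∈ s, 0 ≤ a i := fun i hi => ha i (mem_insert_of_mem hi)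
    calc 1 + (a j + ∑ i ∈ s, a i)
        ≤ 1 + (a j + ∑ i ∈ s, a i) + a j * ∑ i ∈ s, a i :=
          le_add_of_nonneg_right (mul_nonneg haj (sum_nonneg hs))
      _ = (1 + a j) * (1 + ∑ i ∈ s, a i) := by ring
      _ ≤ (1 + a j) * ∏ i ∈ s, (1 + a i) :=
          mul_le_mul_of_nonneg_left (ih hs) (add_nonneg zero_le_one haj)

namespace Real

variable {ι : Type*} [Fintype ι] [DecidableEq ι]

theorem exp_div_sum_exp_eq_inv (f : ι → ℝ) (c : ι) :
    exp (f c) / ∑ c', exp (f c') = (1 + ∑ c' ∈ univ.erase c, exp (f c' - f c))⁻¹ := by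
  rw [← inv_div, sum_div, ← add_sum_erase _ _ (mem_univ c)]
  simp [exp_sub]

theorem prod_sigmoid_le_exp_div_sum_exp (f : ι → ℝ) (c : ι) :
    ∏ c' ∈ univ.erase c, sigmoid (f c - f c') ≤ exp (f c) / ∑ c', exp (f c') := by
  have hprod : ∏ c' ∈ univ.erase c, sigmoid (f c - f c') =
      (∏ c' ∈ univ.erase c, (1 + exp (f c' - f c)))⁻¹ := by
    simp [sigmoid_def, prod_inv_distrib]
  rw [hprod, exp_div_sum_exp_eq_inv]
  exact inv_anti₀ (by positivity)
    (one_add_sum_le_prod_one_add _ fun c' _ => (exp_pos _).le)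

end Real

theorem stmt1 (C : ℕ) (f : Fin C → ℝ) (c : Fin C) :
    ∏ c' ∈ Finset.univ.filter (fun c' => c' ≠ c), (1 / (1 + Real.exp (-(f c - f c')))) ≤
      Real.exp (f c) / ∑ c', Real.exp (f c') := by
  simpa only [filter_ne', one_div, ← sigmoid_def] using prod_sigmoid_le_exp_div_sum_exp f c
end

section
/- For all real x, cosh(x) = Π_{k=1}^{∞} (1 + x² / (π²(k - 1/2)²)), i.e., the infinite product over k ≥ 1 converges to cosh(x). -/
open Filter Complex Real

lemma split_prod (w : ℂ) (K : ℕ) :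
    ∏ j ∈ Finset.range (2 * K), (1 - (2 * w) ^ 2 / ((j : ℂ) + 1) ^ 2) =
    (∏ k ∈ Finset.range K, (1 - w ^ 2 / ((k : ℂ) + 1) ^ 2)) *
      ∏ k ∈ Finset.range K, (1 - 4 * w ^ 2 / (2 * (k : ℂ) + 1) ^ 2) := by
  induction K with
  | zero => simp
  | succ K ih =>
    rw [mul_add, mul_one, Finset.prod_range_succ, Finset.prod_range_succ,
      Finset.prod_range_succ, Finset.prod_range_succ, ih]
    have h1 : (2 * (K : ℂ) + 1) ≠ 0 := by
      have : ((2 * K + 1 : ℕ) : ℂ) ≠ 0 := Nat.cast_ne_zero.mpr (by omega)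
      push_cast at this; exact this
    have h2 : ((K : ℂ) + 1) ≠ 0 := by
      have : ((K + 1 : ℕ) : ℂ) ≠ 0 := Nat.cast_ne_zero.mpr (by omega)
      push_cast at this; exact this
    have h3 : (2 * (K : ℂ) + 1 + 1) ≠ 0 := by
      have : ((2 * K + 2 : ℕ) : ℂ) ≠ 0 := Nat.cast_ne_zero.mpr (by omega)
      intro h; exact this (by push_cast; linear_combination h)
    push_cast
    field_simp
    ring

lemma cosh_prod_complex (x : ℝ) (hx : x ≠ 0) :
    Tendsto (fun K : ℕ => ∏ k ∈ Finset.range K,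
        (1 - 4 * (Complex.I * x / Real.pi) ^ 2 / (2 * (k : ℂ) + 1) ^ 2))
      atTop (nhds (Complex.cosh x)) := by
  set w : ℂ := Complex.I * x / Real.pi with hw
  have hpi : (Real.pi : ℂ) ≠ 0 := by exact_mod_cast Real.pi_ne_zero
  have hpw : (Real.pi : ℂ) * w = Complex.I * x := by rw [hw]; field_simp
  have hsin : Complex.sin ((Real.pi : ℂ) * w) = Real.sinh x * Complex.I := by
    rw [hpw, mul_comm Complex.I (x : ℂ), Complex.sin_mul_I, Complex.ofReal_sinh]
  have hsin_ne : Complex.sin ((Real.pi : ℂ) * w) ≠ 0 := by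
    rw [hsin]
    exact mul_ne_zero (by exact_mod_cast Real.sinh_ne_zero.mpr hx) Complex.I_ne_zero
  -- denominator sequence nonzero
  have hfac : ∀ k : ℕ, (1 - w ^ 2 / ((k : ℂ) + 1) ^ 2) =
      ((1 + x ^ 2 / (Real.pi ^ 2 * ((k : ℝ) + 1) ^ 2) : ℝ) : ℂ) := by
    intro k
    have hk : ((k : ℂ) + 1) ≠ 0 := by
      have : ((k + 1 : ℕ) : ℂ) ≠ 0 := Nat.cast_ne_zero.mpr (by omega)
      push_cast at this; exact this
    have hk' : ((k : ℝ) + 1) ≠ 0 := by positivity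
    rw [hw]
    push_cast
    field_simp
    ring_nf
    simp [Complex.I_sq]
  have hP_ne : ∀ K : ℕ, ((Real.pi : ℂ) * w *
      ∏ j ∈ Finset.range K, (1 - w ^ 2 / ((j : ℂ) + 1) ^ 2)) ≠ 0 := by
    intro K
    refine mul_ne_zero (by rw [hpw]; exact mul_ne_zero Complex.I_ne_zero (by exact_mod_cast hx)) ?_
    refine Finset.prod_ne_zero_iff.mpr fun j _ => ?_
    rw [hfac j]
    have : (0 : ℝ) < 1 + x ^ 2 / (Real.pi ^ 2 * ((j : ℝ) + 1) ^ 2) := by positivity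
    exact_mod_cast this.ne'
  have h2K : Tendsto (fun K : ℕ => 2 * K) atTop atTop :=
    tendsto_atTop_atTop.mpr fun b => ⟨b, fun a ha => by omega⟩
  have h1 := (Complex.tendsto_euler_sin_prod (2 * w)).comp h2K
  have h2 := Complex.tendsto_euler_sin_prod w
  have hdiv := h1.div h2 hsin_ne
  have heq : (fun K : ℕ => ((Real.pi : ℂ) * (2 * w) *
        ∏ j ∈ Finset.range (2 * K), (1 - (2 * w) ^ 2 / ((j : ℂ) + 1) ^ 2)) /
      ((Real.pi : ℂ) * w * ∏ j ∈ Finset.range K, (1 - w ^ 2 / ((j : ℂ) + 1) ^ 2))) =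
      fun K : ℕ => 2 * ∏ k ∈ Finset.range K, (1 - 4 * w ^ 2 / (2 * (k : ℂ) + 1) ^ 2) := by
    funext K
    rw [split_prod]
    rw [show (Real.pi : ℂ) * (2 * w) * ((∏ k ∈ Finset.range K, (1 - w ^ 2 / ((k : ℂ) + 1) ^ 2)) *
        ∏ k ∈ Finset.range K, (1 - 4 * w ^ 2 / (2 * (k : ℂ) + 1) ^ 2)) =
      ((Real.pi : ℂ) * w * ∏ j ∈ Finset.range K, (1 - w ^ 2 / ((j : ℂ) + 1) ^ 2)) *
        (2 * ∏ k ∈ Finset.range K, (1 - 4 * w ^ 2 / (2 * (k : ℂ) + 1) ^ 2)) by ring]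
    exact mul_div_cancel_left₀ _ (hP_ne K)
  rw [show (fun K : ℕ => ((Real.pi : ℂ) * (2 * w) * ∏ j ∈ Finset.range (2 * K),
      ((1:ℂ) - (2 * w) ^ 2 / ((j : ℂ) + 1) ^ 2)) /
      ((Real.pi : ℂ) * w * ∏ j ∈ Finset.range K, ((1:ℂ) - w ^ 2 / ((j : ℂ) + 1) ^ 2))) =
      (fun n : ℕ => (Real.pi : ℂ) * (2*w) * ∏ j ∈ Finset.range n,
        ((1:ℂ) - (2*w) ^ 2 / ((j : ℂ) + 1) ^ 2)) ∘ (fun K => 2 * K) /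
      fun n : ℕ => (Real.pi : ℂ) * w * ∏ j ∈ Finset.range n,
        ((1:ℂ) - w ^ 2 / ((j : ℂ) + 1) ^ 2) from rfl] at heq
  rw [heq] at hdiv
  have hlim : Complex.sin ((Real.pi : ℂ) * (2 * w)) / Complex.sin ((Real.pi : ℂ) * w) =
      2 * Complex.cosh x := by
    have hcos : Complex.cos ((Real.pi : ℂ) * w) = Complex.cosh x := by
      rw [hpw, mul_comm Complex.I (x : ℂ), Complex.cos_mul_I]
    rw [show (Real.pi : ℂ) * (2 * w) = 2 * ((Real.pi : ℂ) * w) by ring, Complex.sin_two_mul,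
      hcos]
    field_simp
  rw [hlim] at hdiv
  have := hdiv.div_const 2
  simpa [mul_comm, mul_div_assoc] using this

theorem stmt6 (x : ℝ) :
    Filter.Tendsto
      (fun K : ℕ => ∏ k ∈ Finset.range K, (1 + x ^ 2 / (Real.pi ^ 2 * ((k : ℝ) + 1 - 1 / 2) ^ 2)))
      Filter.atTop (nhds (Real.cosh x)) := by
  rcases eq_or_ne x 0 with rfl | hx
  · simpa using tendsto_const_nhds (α := ℝ) (f := atTop (α := ℕ))
  · rw [← Filter.tendsto_ofReal_iff]
    have h := cosh_prod_complex x hx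
    rw [← Complex.ofReal_cosh] at h
    convert h using 2 with K
    rw [Complex.ofReal_prod]
    refine Finset.prod_congr rfl fun k _ => ?_
    have hk : (2 * (k : ℂ) + 1) ≠ 0 := by
      have : ((2 * k + 1 : ℕ) : ℂ) ≠ 0 := Nat.cast_ne_zero.mpr (by omega)
      push_cast at this; exact this
    have hk' : ((k : ℝ) + 1 - 1/2) ≠ 0 := by
      have h0 : (0:ℝ) ≤ (k:ℝ) := Nat.cast_nonneg k
      intro h; linarith
    have hk2 : ((k : ℂ) + 1 - 1/2) ≠ 0 := by
      intro h; exact hk (by linear_combination 2 * h)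
    have hpi : (Real.pi : ℂ) ≠ 0 := by exact_mod_cast Real.pi_ne_zero
    have hI : (Complex.I * (x:ℂ) / (Real.pi:ℂ)) ^ 2 = -(x:ℂ) ^ 2 / (Real.pi:ℂ) ^ 2 := by
      rw [div_pow, mul_pow, Complex.I_sq]; ring
    rw [hI]
    have hD : ((Real.pi:ℂ) ^ 2 + (Real.pi:ℂ) ^ 2 * (k:ℂ) * 4 + (Real.pi:ℂ) ^ 2 * (k:ℂ) ^ 2 * 4) ≠ 0 := by
      have := mul_ne_zero (pow_ne_zero 2 hpi) (pow_ne_zero 2 hk)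
      intro h; exact this (by linear_combination h)
    push_cast
    field_simp [hD]
    linear_combination (0 * (x:ℂ) ^ 2) * (mul_inv_cancel₀ hD)
end
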